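/- Let c = [c_ε] ∈ ℂ̃_ρ and r = [r_ε] ∈ ℝ̃_ρ with r > 0. Then the sharp open ball equals the strongly internal set of Euclidean balls, B_r(c) = ⟨E_{r_ε}(c_ε)⟩, and the sharp closed ball equals the internal set, cl B_r(c) = [E_{r_ε}(c_ε)], where E_s(w) := { z ∈ ℂ : |z − w| < s }. -/

import Mathlib

open Filter Topology

namespace RC

def F : Filter ℝ := nhdsWithin 0 (Set.Ioi 0)

/-- A gauge: a net `ρ : (0,1] → (0,1]` with `ρ ε → 0` as `ε → 0⁺`. -/
def Gauge (ρ : ℝ → ℝ) : Prop :=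
  (∀ ε ∈ Set.Ioc (0:ℝ) 1, ρ ε ∈ Set.Ioc (0:ℝ) 1) ∧ Tendsto ρ F (nhds 0)

/-- ρ-moderate real nets: `x_ε = O(ρ_ε^{-N})` for some `N`. -/
def Mod (ρ x : ℝ → ℝ) : Prop :=
  ∃ N : ℕ, ∃ C : ℝ, ∀ᶠ ε in F, |x ε| ≤ C * (ρ ε)⁻¹ ^ N

/-- ρ-negligible real nets: `x_ε = O(ρ_ε^{N})` for all `N`. -/
def Ngl (ρ x : ℝ → ℝ) : Prop :=
  ∀ N : ℕ, ∃ C : ℝ, ∀ᶠ ε in F, |x ε| ≤ C * ρ ε ^ N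

def Eqv (ρ x y : ℝ → ℝ) : Prop := Ngl ρ (x - y)

/-- The order on generalized numbers, at the level of representatives. -/
def leG (ρ x y : ℝ → ℝ) : Prop :=
  ∀ x', Mod ρ x' → Eqv ρ x' x → ∃ y', Mod ρ y' ∧ Eqv ρ y' y ∧ ∀ᶠ ε in F, x' ε ≤ y' ε

/-- Invertibility in the quotient ring, at the level of representatives. -/
def InvG (ρ x : ℝ → ℝ) : Prop := ∃ y, Mod ρ y ∧ Eqv ρ (x * y) 1

def ltG (ρ x y : ℝ → ℝ) : Prop := leG ρ x y ∧ InvG ρ (y - x)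

def posInv (ρ r : ℝ → ℝ) : Prop := ltG ρ 0 r

def ModC (ρ : ℝ → ℝ) (x : ℝ → ℂ) : Prop :=
  ∃ N : ℕ, ∃ C : ℝ, ∀ᶠ ε in F, ‖x ε‖ ≤ C * (ρ ε)⁻¹ ^ N

def NglC (ρ : ℝ → ℝ) (x : ℝ → ℂ) : Prop :=
  ∀ N : ℕ, ∃ C : ℝ, ∀ᶠ ε in F, ‖x ε‖ ≤ C * ρ ε ^ N

def EqvC (ρ : ℝ → ℝ) (x y : ℝ → ℂ) : Prop := NglC ρ (x - y)

def InvC (ρ : ℝ → ℝ) (x : ℝ → ℂ) : Prop := ∃ y, ModC ρ y ∧ EqvC ρ (x * y) 1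

noncomputable def absC (x : ℝ → ℂ) : ℝ → ℝ := fun ε => ‖x ε‖

/-- Membership in the internal set `[A_ε]` of complex subsets. -/
def memIntC (ρ : ℝ → ℝ) (A : ℝ → Set ℂ) (x : ℝ → ℂ) : Prop :=
  ∃ x', ModC ρ x' ∧ EqvC ρ x' x ∧ ∀ᶠ ε in F, x' ε ∈ A ε

/-- Membership in the strongly internal set `⟨A_ε⟩` of complex subsets. -/
def memStrC (ρ : ℝ → ℝ) (A : ℝ → Set ℂ) (x : ℝ → ℂ) : Prop :=
  ∀ x', ModC ρ x' → EqvC ρ x' x → ∀ᶠ ε in F, x' ε ∈ A ε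
/-!
Write `u = |z - c|`. In `ℝ̃_ρ`, `u < r` means `r_ε - u_ε ≥ ρ_ε ^ N` eventually for some `N`, and
`u ≤ r` means `u_ε ≤ r_ε + n_ε` eventually for a negligible net `n`. The first condition makes
every representative of `z` eventually lie in the balls, by the triangle inequality. Conversely,
if `r_ε - u_ε` is frequently below every `ρ_ε ^ N`, pushing `z` radially outward by a negligible
amount along a sequence `ε_k → 0` yields a representative of `z` outside the balls at every
`ε_k`. For the closed ball, pulling `z` radially inward to distance `min (u_ε, r_ε - δ_ε)` from
`c`, with `δ` negligible and `0 < δ ≤ r` (possible because `r > 0`), moves `z` by a negligible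
amount into the balls.
-/

open Set

variable {ρ : ℝ → ℝ}

lemma Gauge.eventually_pos_le_one (hρ : Gauge ρ) : ∀ᶠ ε in F, 0 < ρ ε ∧ ρ ε ≤ 1 := by
  filter_upwards [(Ioo_mem_nhdsGT one_pos : Ioo (0 : ℝ) 1 ∈ F)] with ε hε
  exact hρ.1 ε ⟨hε.1, hε.2.le⟩

lemma Gauge.eventually_const_mul_lt (hρ : Gauge ρ) (C : ℝ) {b : ℝ} (hb : 0 < b) :
    ∀ᶠ ε in F, C * ρ ε < b :=
  (hρ.2.const_mul C).eventually_lt_const (by simpa using hb)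

lemma Gauge.eventually_pow_ceil_inv_le (hρ : Gauge ρ) (N : ℕ) :
    ∀ᶠ ε in F, ρ ε ^ ⌈ε⁻¹⌉₊ ≤ ρ ε ^ N := by
  have hinv : ∀ᶠ ε in F, (N : ℝ) ≤ ε⁻¹ := tendsto_inv_nhdsGT_zero.eventually_ge_atTop _
  filter_upwards [hρ.eventually_pos_le_one, hinv] with ε ⟨h0, h1⟩ hN
  exact pow_le_pow_of_le_one h0.le h1 (by exact_mod_cast hN.trans (Nat.le_ceil _))

section Nets

variable {x y : ℝ → ℝ}

lemma ngl_zero : Ngl ρ 0 := fun _ => ⟨0, by simp⟩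

lemma Ngl.of_abs_le (hy : Ngl ρ y) (h : ∀ᶠ ε in F, |x ε| ≤ |y ε|) : Ngl ρ x := fun N => by
  obtain ⟨C, hC⟩ := hy N
  exact ⟨C, by filter_upwards [h, hC] with ε h1 h2 using h1.trans h2⟩

lemma Ngl.add (hx : Ngl ρ x) (hy : Ngl ρ y) : Ngl ρ (x + y) := fun N => by
  obtain ⟨C, hC⟩ := hx N
  obtain ⟨D, hD⟩ := hy N
  refine ⟨C + D, ?_⟩
  filter_upwards [hC, hD] with ε h1 h2
  calc |(x + y) ε| ≤ |x ε| + |y ε| := abs_add_le _ _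
    _ ≤ (C + D) * ρ ε ^ N := by linarith

lemma Ngl.mod (hx : Ngl ρ x) : Mod ρ x := by
  obtain ⟨C, hC⟩ := hx 0
  exact ⟨0, C, by simpa using hC⟩

lemma Ngl.eventually_abs_lt_pow (hρ : Gauge ρ) (hx : Ngl ρ x) (N : ℕ) :
    ∀ᶠ ε in F, |x ε| < ρ ε ^ N := by
  obtain ⟨C, hC⟩ := hx (N + 1)
  filter_upwards [hC, hρ.eventually_const_mul_lt C one_pos, hρ.eventually_pos_le_one]
    with ε h1 h2 h3
  calc |x ε| ≤ C * ρ ε * ρ ε ^ N := by rwa [mul_assoc, ← pow_succ']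
    _ < 1 * ρ ε ^ N := mul_lt_mul_of_pos_right h2 (pow_pos h3.1 N)
    _ = ρ ε ^ N := one_mul _

lemma eqv_refl (x : ℝ → ℝ) : Eqv ρ x x :=
  ngl_zero.of_abs_le (.of_forall fun ε => by simp)

lemma Mod.of_abs_le (hy : Mod ρ y) (h : ∀ᶠ ε in F, |x ε| ≤ |y ε|) : Mod ρ x := by
  obtain ⟨N, C, hC⟩ := hy
  exact ⟨N, C, by filter_upwards [h, hC] with ε h1 h2 using h1.trans h2⟩

lemma Mod.add (hρ : Gauge ρ) (hx : Mod ρ x) (hy : Mod ρ y) : Mod ρ (x + y) := by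
  obtain ⟨N, C, hC⟩ := hx
  obtain ⟨M, D, hD⟩ := hy
  refine ⟨N + M, |C| + |D|, ?_⟩
  filter_upwards [hC, hD, hρ.eventually_pos_le_one] with ε h1 h2 ⟨hρ0, hρ1⟩
  have hinv : 1 ≤ (ρ ε)⁻¹ := one_le_inv₀ hρ0 |>.2 hρ1
  have hN : (ρ ε)⁻¹ ^ N ≤ (ρ ε)⁻¹ ^ (N + M) := pow_le_pow_right₀ hinv (by omega)
  have hM : (ρ ε)⁻¹ ^ M ≤ (ρ ε)⁻¹ ^ (N + M) := pow_le_pow_right₀ hinv (by omega)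
  have hN0 : 0 ≤ (ρ ε)⁻¹ ^ N := by positivity
  have hM0 : 0 ≤ (ρ ε)⁻¹ ^ M := by positivity
  calc |(x + y) ε| ≤ |x ε| + |y ε| := abs_add_le _ _
    _ ≤ (|C| + |D|) * (ρ ε)⁻¹ ^ (N + M) := by
      nlinarith [le_abs_self C, le_abs_self D, abs_nonneg C, abs_nonneg D]

lemma Mod.neg (hx : Mod ρ x) : Mod ρ (-x) :=
  hx.of_abs_le (.of_forall fun ε => by simp)

lemma Mod.sub (hρ : Gauge ρ) (hx : Mod ρ x) (hy : Mod ρ y) : Mod ρ (x - y) := by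
  simpa [sub_eq_add_neg] using hx.add hρ hy.neg

lemma exists_ngl_pos_le (hρ : Gauge ρ) (hy : ∃ m : ℕ, ∀ᶠ ε in F, ρ ε ^ m ≤ y ε) :
    ∃ δ : ℝ → ℝ, Ngl ρ δ ∧ ∀ᶠ ε in F, 0 < δ ε ∧ δ ε ≤ y ε := by
  obtain ⟨m, hm⟩ := hy
  refine ⟨fun ε => ρ ε ^ ⌈ε⁻¹⌉₊, fun N => ⟨1, ?_⟩, ?_⟩
  · filter_upwards [hρ.eventually_pow_ceil_inv_le N, hρ.eventually_pos_le_one] with ε h1 h2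
    rwa [one_mul, abs_of_pos (pow_pos h2.1 _)]
  · filter_upwards [hρ.eventually_pow_ceil_inv_le m, hm, hρ.eventually_pos_le_one]
      with ε h1 h2 h3
    exact ⟨pow_pos h3.1 _, h1.trans h2⟩

lemma exists_ngl_frequently_le (hρ : Gauge ρ) (hx : ∀ N : ℕ, ∃ᶠ ε in F, x ε < ρ ε ^ N) :
    ∃ n : ℝ → ℝ, Ngl ρ n ∧ (∀ ε, 0 ≤ n ε) ∧ ∃ᶠ ε in F, x ε ≤ n ε := by
  have hpts (k : ℕ) : ∃ ε, x ε < ρ ε ^ k ∧ ε ∈ Ioo 0 (1 / (k + 1 : ℝ)) :=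
    ((hx k).and_eventually (Ioo_mem_nhdsGT (by positivity))).exists
  choose e hxe he using hpts
  have he_tendsto : Tendsto e atTop F :=
    tendsto_nhdsWithin_of_tendsto_nhds_of_eventually_within e
      (squeeze_zero (fun k => (he k).1.le) (fun k => (he k).2.le)
        tendsto_one_div_add_atTop_nhds_zero_nat)
      (.of_forall fun k => (he k).1)
  refine ⟨(range e).indicator fun ε => max (x ε) 0, fun N => ⟨1, ?_⟩,
    indicator_nonneg fun _ _ => le_max_right _ _, he_tendsto.frequently (.of_forall fun k => ?_)⟩
  · have hbefore : ∀ᶠ ε in F, ∀ k ∈ Iio N, ε < e k :=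
      (eventually_all_finite (finite_Iio N)).2 fun k _ =>
        mem_of_superset (Ioo_mem_nhdsGT (he k).1) fun _ h => h.2
    filter_upwards [hbefore, hρ.eventually_pos_le_one] with ε hε ⟨hρ0, hρ1⟩
    rw [one_mul]
    by_cases hmem : ε ∈ range e
    · obtain ⟨k, rfl⟩ := hmem
      have hNk : N ≤ k := not_lt.1 fun hk => lt_irrefl _ (hε k hk)
      rw [indicator_of_mem (mem_range_self k), abs_of_nonneg (le_max_right _ _)]
      exact max_le ((hxe k).le.trans (pow_le_pow_of_le_one hρ0.le hρ1 hNk)) (by positivity)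
    · simpa [indicator_of_notMem hmem] using pow_nonneg hρ0.le N
  · rw [indicator_of_mem (mem_range_self k)]
    exact le_max_left _ _

end Nets

lemma InvG.exists_pow_le_abs (hρ : Gauge ρ) {x : ℝ → ℝ} (hx : InvG ρ x) :
    ∃ N : ℕ, ∀ᶠ ε in F, ρ ε ^ N ≤ |x ε| := by
  obtain ⟨y, ⟨N, C, hy⟩, hxy⟩ := hx
  refine ⟨N + 1, ?_⟩
  filter_upwards [hy, hxy.eventually_abs_lt_pow hρ 1, hρ.eventually_const_mul_lt (C + 1) one_pos,
    hρ.eventually_pos_le_one] with ε hyε hxyε hCρ hρε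
  by_contra! hsmall
  have hprod : 1 - ρ ε ≤ |x ε| * |y ε| := by
    have := abs_sub_abs_le_abs_sub 1 (x ε * y ε)
    rw [abs_sub_comm, abs_one, abs_mul] at this
    simp only [Pi.sub_apply, Pi.mul_apply, Pi.one_apply, pow_one] at hxyε
    linarith
  have hcancel : ρ ε ^ (N + 1) * (ρ ε)⁻¹ ^ N = ρ ε := by
    rw [pow_succ, inv_pow, mul_right_comm, mul_inv_cancel₀ (pow_pos hρε.1 N).ne', one_mul]
  have : |x ε| * |y ε| ≤ C * ρ ε := by
    calc |x ε| * |y ε| ≤ ρ ε ^ (N + 1) * (C * (ρ ε)⁻¹ ^ N) :=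
          mul_le_mul hsmall.le hyε (abs_nonneg _) (pow_pos hρε.1 _).le
      _ = C * ρ ε := by rw [mul_left_comm, hcancel]
  linarith

lemma ltG_iff_exists_pow_le (hρ : Gauge ρ) {u r : ℝ → ℝ} (hu : Mod ρ u) (hr : Mod ρ r) :
    ltG ρ u r ↔ ∃ N : ℕ, ∀ᶠ ε in F, ρ ε ^ N ≤ r ε - u ε := by
  constructor
  · rintro ⟨hle, hinv⟩
    obtain ⟨N, hN⟩ := hinv.exists_pow_le_abs hρ
    obtain ⟨y, -, hyr, huy⟩ := hle u hu (eqv_refl u)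
    refine ⟨N, ?_⟩
    filter_upwards [hN, huy, hyr.eventually_abs_lt_pow hρ N] with ε h1 h2 h3
    simp only [Pi.sub_apply] at h1 h3
    cases abs_cases (r ε - u ε) <;> cases abs_lt.1 h3 <;> linarith
  · rintro ⟨N, hN⟩
    have hpos : ∀ᶠ ε in F, 0 < ρ ε ^ N ∧ ρ ε ^ N ≤ r ε - u ε := by
      filter_upwards [hN, hρ.eventually_pos_le_one] with ε h1 h2 using ⟨pow_pos h2.1 N, h1⟩
    refine ⟨fun x hx hxu => ⟨x + (r - u), hx.add hρ (hr.sub hρ hu), ?_, ?_⟩,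
      (r - u)⁻¹, ⟨N, 1, ?_⟩, ngl_zero.of_abs_le ?_⟩
    · rwa [Eqv, show x + (r - u) - r = x - u by abel]
    · filter_upwards [hpos] with ε h
      simp only [Pi.add_apply, Pi.sub_apply]
      linarith
    · filter_upwards [hpos] with ε ⟨h0, h1⟩
      rw [Pi.inv_apply, Pi.sub_apply, abs_of_pos (inv_pos.2 (h0.trans_le h1)), one_mul, inv_pow]
      exact inv_anti₀ h0 h1
    · filter_upwards [hpos] with ε ⟨h0, h1⟩
      simp [mul_inv_cancel₀ (h0.trans_le h1).ne']

lemma leG_iff_exists_ngl (hρ : Gauge ρ) {u r : ℝ → ℝ} (hu : Mod ρ u) (hr : Mod ρ r) :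
    leG ρ u r ↔ ∃ n : ℝ → ℝ, Ngl ρ n ∧ ∀ᶠ ε in F, u ε ≤ r ε + n ε := by
  constructor
  · intro h
    obtain ⟨y, -, hyr, huy⟩ := h u hu (eqv_refl u)
    exact ⟨y - r, hyr, by filter_upwards [huy] with ε h using by simpa using h⟩
  · rintro ⟨n, hn, hun⟩ x hx hxu
    set m : ℝ → ℝ := fun ε => max (u ε - r ε) 0
    have hm : Ngl ρ m := hn.of_abs_le <| by
      filter_upwards [hun] with ε h
      rw [abs_of_nonneg (le_max_right _ _)]
      exact max_le (by linarith [le_abs_self (n ε)]) (abs_nonneg _)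
    refine ⟨x - u + r + m, ((hx.sub hρ hu).add hρ hr).add hρ hm.mod, ?_,
      .of_forall fun ε => ?_⟩
    · rw [Eqv, show x - u + r + m - r = x - u + m by abel]
      exact hxu.add hm
    · simp only [Pi.add_apply, Pi.sub_apply, m]
      linarith [le_max_left (u ε - r ε) 0]

noncomputable def rayPoint (c z : ℂ) (s : ℝ) : ℂ :=
  c + s * Complex.exp (Complex.arg (z - c) * Complex.I)

lemma norm_rayPoint_sub_center (c z : ℂ) (s : ℝ) : ‖rayPoint c z s - c‖ = |s| := by
  simp [rayPoint]

lemma norm_rayPoint_sub (c z : ℂ) (s : ℝ) : ‖rayPoint c z s - z‖ = |s - ‖z - c‖| := by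
  have hpolar := Complex.norm_mul_exp_arg_mul_I (z - c)
  have : rayPoint c z s - z =
      ((s - ‖z - c‖ : ℝ) : ℂ) * Complex.exp (Complex.arg (z - c) * Complex.I) := by
    rw [rayPoint]
    push_cast
    linear_combination hpolar
  rw [this, norm_mul, Complex.norm_exp_ofReal_mul_I, mul_one, Complex.norm_real, Real.norm_eq_abs]

section ComplexNets

variable {z c : ℝ → ℂ}

lemma modC_iff_mod_absC : ModC ρ z ↔ Mod ρ (absC z) := by
  simp only [ModC, Mod, absC, abs_norm]

lemma nglC_iff_ngl_absC : NglC ρ z ↔ Ngl ρ (absC z) := by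
  simp only [NglC, Ngl, absC, abs_norm]

lemma ModC.of_eqvC (hρ : Gauge ρ) (hc : ModC ρ c) (h : EqvC ρ z c) : ModC ρ z := by
  rw [modC_iff_mod_absC] at hc ⊢
  rw [EqvC, nglC_iff_ngl_absC] at h
  refine (hc.add hρ h.mod).of_abs_le (.of_forall fun ε => ?_)
  simp only [absC, Pi.add_apply, Pi.sub_apply, abs_norm]
  exact (norm_le_insert' _ _).trans (le_abs_self _)

lemma mod_absC_sub (hρ : Gauge ρ) (hz : ModC ρ z) (hc : ModC ρ c) : Mod ρ (absC (z - c)) := by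
  rw [modC_iff_mod_absC] at hz hc
  refine (hz.add hρ hc).of_abs_le (.of_forall fun ε => ?_)
  simp only [absC, Pi.add_apply, Pi.sub_apply, abs_norm]
  exact (norm_sub_le _ _).trans (le_abs_self _)

variable {r : ℝ → ℝ}

lemma memStrC_ball_iff (hρ : Gauge ρ) (hz : ModC ρ z) :
    memStrC ρ (fun ε => Metric.ball (c ε) (r ε)) z ↔
      ∃ N : ℕ, ∀ᶠ ε in F, ρ ε ^ N ≤ r ε - absC (z - c) ε := by
  constructor
  · intro hmem
    by_contra! hfar
    obtain ⟨δ, hδ, hδ0, hfreq⟩ := exists_ngl_frequently_le hρ hfar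
    set z' : ℝ → ℂ := fun ε => rayPoint (c ε) (z ε) (absC (z - c) ε + δ ε)
    have hz'z : EqvC ρ z' z := by
      rw [EqvC, nglC_iff_ngl_absC]
      refine hδ.of_abs_le (.of_forall fun ε => ?_)
      simp [z', absC, norm_rayPoint_sub]
    obtain ⟨ε, hle, hin⟩ := (hfreq.and_eventually (hmem z' (hz.of_eqvC hρ hz'z) hz'z)).exists
    have hu0 : 0 ≤ absC (z - c) ε := norm_nonneg _
    rw [Metric.mem_ball, dist_eq_norm, norm_rayPoint_sub_center,
      abs_of_nonneg (add_nonneg hu0 (hδ0 ε))] at hin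
    linarith
  · rintro ⟨N, hN⟩ z' - hz'z
    filter_upwards [hN, (nglC_iff_ngl_absC.1 hz'z).eventually_abs_lt_pow hρ N] with ε h1 h2
    rw [Metric.mem_ball, dist_eq_norm]
    simp only [absC, Pi.sub_apply, abs_norm] at h1 h2
    linarith [norm_sub_le_norm_sub_add_norm_sub (z' ε) (z ε) (c ε)]

lemma memIntC_ball_iff (hρ : Gauge ρ) (hz : ModC ρ z)
    (hr : ∃ m : ℕ, ∀ᶠ ε in F, ρ ε ^ m ≤ r ε) :
    memIntC ρ (fun ε => Metric.ball (c ε) (r ε)) z ↔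
      ∃ n : ℝ → ℝ, Ngl ρ n ∧ ∀ᶠ ε in F, absC (z - c) ε ≤ r ε + n ε := by
  constructor
  · rintro ⟨z', -, hz'z, hin⟩
    refine ⟨absC (z' - z), nglC_iff_ngl_absC.1 hz'z, ?_⟩
    filter_upwards [hin] with ε hε
    rw [Metric.mem_ball, dist_eq_norm] at hε
    simp only [absC, Pi.sub_apply]
    linarith [norm_sub_le_norm_sub_add_norm_sub (z ε) (z' ε) (c ε), norm_sub_rev (z ε) (z' ε)]
  · rintro ⟨n, hn, hzr⟩
    obtain ⟨δ, hδ, hδr⟩ := exists_ngl_pos_le hρ hr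
    set z' : ℝ → ℂ := fun ε => rayPoint (c ε) (z ε) (min (absC (z - c) ε) (r ε - δ ε))
    have hz'z : EqvC ρ z' z := by
      rw [EqvC, nglC_iff_ngl_absC]
      refine (hn.add hδ).of_abs_le ?_
      filter_upwards [hzr, hδr] with ε h1 h2
      simp only [z', absC, Pi.sub_apply, Pi.add_apply, norm_rayPoint_sub, abs_abs] at h1 ⊢
      rcases min_cases ‖z ε - c ε‖ (r ε - δ ε) with ⟨hmin, -⟩ | ⟨hmin, hlt⟩ <;> rw [hmin]
      · simp
      · rw [abs_of_neg (by linarith : r ε - δ ε - ‖z ε - c ε‖ < 0)]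
        exact le_abs.2 (.inl (by linarith))
    refine ⟨z', hz.of_eqvC hρ hz'z, hz'z, ?_⟩
    filter_upwards [hδr] with ε ⟨h0, h1⟩
    have hu0 : 0 ≤ absC (z - c) ε := norm_nonneg _
    rw [Metric.mem_ball, dist_eq_norm, norm_rayPoint_sub_center,
      abs_of_nonneg (le_min hu0 (by linarith))]
    exact (min_le_right _ _).trans_lt (by linarith)

end ComplexNets

/-- The sharp open ball equals the strongly internal set of Euclidean balls, and the sharp
closed ball equals the internal set of Euclidean balls. -/
theorem ball_eq_stronglyInternal_closedBall_eq_internal (ρ : ℝ → ℝ) (hρ : Gauge ρ)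
    (c : ℝ → ℂ) (hc : ModC ρ c) (r : ℝ → ℝ) (hr : Mod ρ r) (hrpos : posInv ρ r) :
    ∀ z, ModC ρ z →
      ((ltG ρ (absC (z - c)) r ↔ memStrC ρ (fun ε => Metric.ball (c ε) (r ε)) z) ∧
       (leG ρ (absC (z - c)) r ↔ memIntC ρ (fun ε => Metric.ball (c ε) (r ε)) z)) := by
  intro z hz
  have hu : Mod ρ (absC (z - c)) := mod_absC_sub hρ hz hc
  have hr0 : ∃ m : ℕ, ∀ᶠ ε in F, ρ ε ^ m ≤ r ε := by
    simpa using (ltG_iff_exists_pow_le hρ ngl_zero.mod hr).1 hrpos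
  exact ⟨(ltG_iff_exists_pow_le hρ hu hr).trans (memStrC_ball_iff hρ hz).symm,
    (leG_iff_exists_ngl hρ hu hr).trans (memIntC_ball_iff hρ hz hr0).symm⟩

end RC
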